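/- arXiv:1107.5400 — 3 statements merged into one kernel-verified Lean document; each statement's English description precedes it below -/
import Mathlib

section
/- Let X, X_1, X_2, ... be i.i.d. real random variables with E[X] = -a < 0, and let S_n = X_1 + ... + X_n with S_0 = 0. For z ≥ 0 define τ_z = min{k ≥ 0 : S_k ≤ -z} and M = sup_{k ≥ 0} S_k, M_{τ_z} = max_{1 ≤ k ≤ τ_z} S_k. Then for every x > 0 and z > 0, P(M > x) ≤ Σ_{j=0}^∞ P(M_{τ_z} > x + j z). -/
/-!
Let `L_j` be the first time the walk is at or below `-j z`. The walk restarted at any fixed time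
is a copy of the walk, so a.s. every restarted walk reaches `-z`, and hence every `L_j` is finite.
If `S_k > x`, take the least `j` with `k ≤ L_{j+1}`; then `L_j < k`, and the walk restarted at
`L_j` exceeds `x + j z` at time `k - L_j`, before it first drops by `z`. So `{M > x}` is covered by
the events `{L_j = n} ∩ {the walk restarted at n exceeds x + j z before dropping by z}`. The first
is determined by `X_0, …, X_{n-1}`, the second by `X_n, X_{n+1}, …` and has the probability of
`{M_{τ_z} > x + j z}`; and `∑_n P(L_j = n) ≤ 1`.
-/

open MeasureTheory ProbabilityTheory Finset Function
open scoped ENNReal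

/-- The first time `s` is at or below `c`, or `0` (`= sInf ∅`) if there is none. -/
noncomputable def hitTime (s : ℕ → ℝ) (c : ℝ) : ℕ := sInf {k | s k ≤ c}

noncomputable def excursionMax (z : ℝ) (s : ℕ → ℝ) : ℝ :=
  ⨆ k ∈ Finset.Icc 1 (hitTime s (-z)), s k

def firstPassageEvent {Ω : Type*} (f : ℕ → Ω → ℝ) (c : ℝ) (n : ℕ) : Set Ω :=
  {ω | f n ω ≤ c ∧ ∀ k < n, c < f k ω}

lemma le_ciSup_finset_of_mem {ι α : Type*} [ConditionallyCompleteLattice α] (f : ι → α)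
    {s : Finset ι} {i : ι} (hi : i ∈ s) : f i ≤ ⨆ k ∈ s, f k := by
  refine le_ciSup₂ (f := fun k (_ : k ∈ s) => f k) ?_ i hi
  exact (s.finite_toSet.image f).bddAbove.mono
    (Set.iUnion_subset fun k => Set.range_subset_iff.2 fun hk => Set.mem_image_of_mem f hk)

section HitTime

variable {s : ℕ → ℝ} {c : ℝ}

lemma hitTime_le {k : ℕ} (h : s k ≤ c) : hitTime s c ≤ k := Nat.sInf_le h

lemma apply_hitTime_le (h : ∃ k, s k ≤ c) : s (hitTime s c) ≤ c := Nat.sInf_mem h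

lemma lt_apply_of_lt_hitTime {m : ℕ} (hm : m < hitTime s c) : c < s m :=
  not_le.1 (Nat.notMem_of_lt_sInf hm)

end HitTime

lemma measurable_nat_sInf {α : Type*} [MeasurableSpace α] {p : ℕ → α → Prop}
    (hp : ∀ k, MeasurableSet {a | p k a}) : Measurable fun a => sInf {k | p k a} := by
  classical
  refine measurable_to_countable' fun n => ?_
  have hpre : (fun a => sInf {k | p k a}) ⁻¹' {n} =
      {a | p n a ∧ ∀ k < n, ¬ p k a} ∪ {a | n = 0 ∧ ∀ k, ¬ p k a} := by
    ext a
    by_cases h : ∃ k, p k a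
    · rw [Set.mem_preimage, Set.mem_singleton_iff, Nat.sInf_def (s := {k | p k a}) h,
        Nat.find_eq_iff]
      simp [h]
    · push Not at h
      simp [h, eq_comm]
  rw [hpre]
  simp only [Set.ofPred_and, Set.ofPred_forall]
  measurability

lemma measurable_hitTime (c : ℝ) : Measurable fun s : ℕ → ℝ => hitTime s c :=
  measurable_nat_sInf fun k => measurableSet_le (measurable_pi_apply k) measurable_const

lemma measurable_excursionMax (z : ℝ) : Measurable (excursionMax z) := by
  have hmax : Measurable fun p : ℕ × (ℕ → ℝ) => ⨆ k ∈ Finset.Icc 1 p.1, p.2 k :=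
    measurable_from_prod_countable_right fun N =>
      Measurable.biSup (Finset.Icc 1 N : Set ℕ) (Set.to_countable _) fun k _ =>
        measurable_pi_apply k
  exact hmax.comp (f := fun s => (hitTime s (-z), s))
    ((measurable_hitTime _).prodMk measurable_id)

lemma measurable_partialSums : Measurable fun (u : ℕ → ℝ) (n : ℕ) => ∑ i ∈ range n, u i :=
  measurable_pi_lambda _ fun _ => Finset.measurable_sum _ fun i _ => measurable_pi_apply i

lemma measurable_sum_range_past {Ω E : Type*} [AddCommMonoid E] {mE : MeasurableSpace E}
    [MeasurableAdd₂ E] {X : ℕ → Ω → E} {m n : ℕ} (hmn : m ≤ n) :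
    Measurable[⨆ i ∈ Set.Iio n, mE.comap (X i)] fun ω => ∑ i ∈ range m, X i ω :=
  Finset.measurable_sum _ fun _ hi => Measurable.of_comap_le <|
    le_biSup (fun i => mE.comap (X i)) (Set.mem_Iio.2 ((mem_range.1 hi).trans_le hmn))

section FirstPassage

variable {Ω : Type*} {f : ℕ → Ω → ℝ} {c : ℝ}

lemma pairwise_disjoint_firstPassageEvent (f : ℕ → Ω → ℝ) (c : ℝ) :
    Pairwise (Disjoint on firstPassageEvent f c) :=
  (pairwise_disjoint_on _).2 fun _ _ hlt =>
    Set.disjoint_left.2 fun _ h h' => (h'.2 _ hlt).not_ge h.1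

lemma measurableSet_firstPassageEvent {m : MeasurableSpace Ω} {n : ℕ}
    (hf : ∀ k ≤ n, Measurable (f k)) : MeasurableSet (firstPassageEvent f c n) := by
  simp only [firstPassageEvent, Set.ofPred_and, Set.ofPred_forall]
  exact (measurableSet_le (hf n le_rfl) measurable_const).inter <|
    MeasurableSet.iInter fun k => MeasurableSet.iInter fun hk =>
      measurableSet_lt measurable_const (hf k hk.le)

lemma mem_firstPassageEvent_hitTime {ω : Ω} (h : ∃ k, f k ω ≤ c) :
    ω ∈ firstPassageEvent f c (hitTime (f · ω) c) :=
  ⟨apply_hitTime_le h, fun _ hk => lt_apply_of_lt_hitTime hk⟩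

end FirstPassage

section Pathwise

variable {u : ℕ → ℝ} {x z : ℝ}

lemma exists_sum_range_le_neg_mul (hdown : ∀ n, ∃ m, ∑ i ∈ range m, u (n + i) ≤ -z) (j : ℕ) :
    ∃ n, ∑ i ∈ range n, u i ≤ -(j * z) := by
  induction j with
  | zero => exact ⟨0, by simp⟩
  | succ j ih =>
    obtain ⟨n, hn⟩ := ih
    obtain ⟨m, hm⟩ := hdown n
    refine ⟨n + m, ?_⟩
    rw [sum_range_add]
    push_cast
    linarith

theorem exists_lt_excursionMax_of_lt (hx : 0 ≤ x) (hz : 0 < z)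
    (hdown : ∀ n, ∃ m, ∑ i ∈ range m, u (n + i) ≤ -z) {k : ℕ} (hk : x < ∑ i ∈ range k, u i) :
    ∃ j : ℕ, x + j * z < excursionMax z fun m =>
      ∑ i ∈ range m, u (hitTime (fun n => ∑ i ∈ range n, u i) (-(j * z)) + i) := by
  classical
  set s : ℕ → ℝ := fun n => ∑ i ∈ range n, u i
  set L : ℕ → ℕ := fun j => hitTime s (-(j * z))
  have hL (j : ℕ) : s (L j) ≤ -(j * z) := apply_hitTime_le (exists_sum_range_le_neg_mul hdown j)
  have hk0 : 0 < k := Nat.pos_of_ne_zero fun h => by simp [h] at hk; linarith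
  have hfar : ∃ j, k ≤ L (j + 1) := by
    -- once `j z` exceeds `∑_{m<k} |s m|`, the level `-(j + 1) z` is not reached before `k`
    obtain ⟨j, hj⟩ := exists_nat_gt ((∑ m ∈ range k, |s m|) / z)
    refine ⟨j, le_of_not_gt fun hlt => ?_⟩
    have hbound : |s (L (j + 1))| ≤ ∑ m ∈ range k, |s m| :=
      single_le_sum (fun m _ => abs_nonneg (s m)) (mem_range.2 hlt)
    have hlevel := hL (j + 1)
    rw [div_lt_iff₀ hz] at hj
    push_cast at hlevel
    linarith [neg_abs_le (s (L (j + 1)))]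
  set j := Nat.find hfar
  have hLj : L j < k := by
    rcases Nat.eq_zero_or_pos j with hj | hj
    · rw [hj]
      exact lt_of_le_of_lt (hitTime_le (by simp [s])) hk0
    · have := Nat.find_min hfar (Nat.sub_one_lt_of_lt hj)
      rwa [Nat.sub_add_cancel hj, not_le] at this
  refine ⟨j, ?_⟩
  set r : ℕ → ℝ := fun m => ∑ i ∈ range m, u (L j + i)
  have hr (m : ℕ) : r m = s (L j + m) - s (L j) := by simp [r, s, sum_range_add]
  have hkσ : k - L j ≤ hitTime r (-z) := by
    have hdrop : r (hitTime r (-z)) ≤ -z := apply_hitTime_le (hdown (L j))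
    rw [hr] at hdrop
    have hnext : L (j + 1) ≤ L j + hitTime r (-z) :=
      hitTime_le (by push_cast; linarith [hL j])
    have hkL : k ≤ L (j + 1) := Nat.find_spec hfar
    omega
  calc x + j * z < r (k - L j) := by rw [hr, Nat.add_sub_cancel' hLj.le]; linarith [hL j]
    _ ≤ excursionMax z r := le_ciSup_finset_of_mem r (mem_Icc.2 ⟨by omega, hkσ⟩)

end Pathwise

namespace ProbabilityTheory

variable {Ω E : Type*} {mΩ : MeasurableSpace Ω} {mE : MeasurableSpace E} {μ : Measure Ω}
  {X : ℕ → Ω → E}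

lemma iIndepFun.identDistrib_shift (hindep : iIndepFun X μ)
    (hident : ∀ i, IdentDistrib (X i) (X 0) μ μ) (n : ℕ) :
    IdentDistrib (fun ω i => X (n + i) ω) (fun ω i => X i ω) μ μ :=
  IdentDistrib.pi (fun i => (hident _).trans (hident i).symm)
    (hindep.precomp (add_right_injective n)) hindep

lemma iIndepFun.ae_forall_shift (hindep : iIndepFun X μ)
    (hident : ∀ i, IdentDistrib (X i) (X 0) μ μ) {p : (ℕ → E) → Prop}
    (hp : MeasurableSet {u | p u}) (h : ∀ᵐ ω ∂μ, p fun i => X i ω) :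
    ∀ᵐ ω ∂μ, ∀ n, p fun i => X (n + i) ω :=
  ae_all_iff.2 fun n => (hindep.identDistrib_shift hident n).symm.ae_snd hp h

lemma iIndepFun.measure_inter_shift_preimage (hmeas : ∀ i, Measurable (X i))
    (hindep : iIndepFun X μ) (hident : ∀ i, IdentDistrib (X i) (X 0) μ μ) {n : ℕ} {A : Set Ω}
    (hA : MeasurableSet[⨆ i ∈ Set.Iio n, mE.comap (X i)] A) {B : Set (ℕ → E)}
    (hB : MeasurableSet B) :
    μ (A ∩ (fun ω i => X (n + i) ω) ⁻¹' B) = μ A * μ ((fun ω i => X i ω) ⁻¹' B) := by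
  have hpast_future :
      Indep (⨆ i ∈ Set.Iio n, mE.comap (X i)) (⨆ i ∈ Set.Ici n, mE.comap (X i)) μ :=
    indep_iSup_of_disjoint (fun i => (hmeas i).comap_le) hindep.iIndep
      (Set.Iio_disjoint_Ici le_rfl)
  have hfuture : Measurable[⨆ i ∈ Set.Ici n, mE.comap (X i)] fun ω i => X (n + i) ω :=
    Measurable.of_comap_le <| by
      rw [MeasurableSpace.comap_process_pi (fun i => X (n + i))]
      exact iSup_le fun i => le_biSup (fun i => mE.comap (X i)) (Nat.le_add_right n i)
  rw [(Indep_iff _ _ _).1 hpast_future _ _ hA (hfuture hB),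
    (hindep.identDistrib_shift hident n).measure_mem_eq hB]

end ProbabilityTheory

theorem measure_le_tsum_of_ae_mem_iUnion_inter {Ω ι κ : Type*} [Countable ι] [Countable κ]
    {mΩ : MeasurableSpace Ω} {μ : Measure Ω} [IsZeroOrProbabilityMeasure μ] {E : Set Ω}
    {G C : ι → κ → Set Ω} {p : ι → ℝ≥0∞} (hGm : ∀ j n, MeasurableSet (G j n))
    (hGd : ∀ j, Pairwise (Disjoint on G j)) (hGC : ∀ j n, μ (G j n ∩ C j n) = μ (G j n) * p j)
    (hE : ∀ᵐ ω ∂μ, ω ∈ E → ∃ j n, ω ∈ G j n ∩ C j n) :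
    μ E ≤ ∑' j, p j :=
  calc μ E ≤ μ (⋃ j, ⋃ n, G j n ∩ C j n) :=
        measure_mono_ae <| hE.mono fun ω h hω => Set.mem_iUnion₂.2 (h hω)
    _ ≤ ∑' j, ∑' n, μ (G j n ∩ C j n) :=
        (measure_iUnion_le _).trans (ENNReal.tsum_le_tsum fun j => measure_iUnion_le _)
    _ = ∑' j, μ (⋃ n, G j n) * p j := by
        simp_rw [hGC, ENNReal.tsum_mul_right, measure_iUnion (hGd _) (hGm _)]
    _ ≤ ∑' j, p j := ENNReal.tsum_le_tsum fun j => mul_le_of_le_one_left' prob_le_one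

theorem stmt_0_general {Ω : Type*} [MeasureSpace Ω] [IsProbabilityMeasure (ℙ : Measure Ω)]
    (X : ℕ → Ω → ℝ) (hmeas : ∀ i, Measurable (X i))
    (hindep : iIndepFun X ℙ)
    (hident : ∀ i, IdentDistrib (X i) (X 0) ℙ ℙ)
    (S : ℕ → Ω → ℝ) (hS : ∀ n ω, S n ω = ∑ i ∈ Finset.range n, X i ω)
    (z x : ℝ) (hz : 0 < z) (hx : 0 < x)
    (τ : Ω → ℕ) (hτ : ∀ ω, τ ω = sInf {k | S k ω ≤ -z})
    (hτfin : ∀ᵐ ω ∂ℙ, ∃ k, S k ω ≤ -z) :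
    ℙ {ω | x < ⨆ k, S k ω} ≤
      ∑' j : ℕ, ℙ {ω | x + (j : ℕ) * z < ⨆ k ∈ Finset.Icc 1 (τ ω), S k ω} := by
  obtain rfl : S = fun n ω => ∑ i ∈ range n, X i ω := funext fun n => funext (hS n)
  obtain rfl : τ = fun ω => hitTime (fun k => ∑ i ∈ range k, X i ω) (-z) := funext hτ
  have hdown : ∀ᵐ ω ∂ℙ, ∀ n, ∃ m, ∑ i ∈ range m, X (n + i) ω ≤ -z :=
    hindep.ae_forall_shift hident (p := fun u => ∃ m, ∑ i ∈ range m, u i ≤ -z)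
      (by
        simp only [Set.ofPred_exists]
        exact .iUnion fun m => measurableSet_le measurable_partialSums.eval measurable_const)
      hτfin
  have hA (j : ℕ) : MeasurableSet
      {u : ℕ → ℝ | x + j * z < excursionMax z fun m => ∑ i ∈ range m, u i} :=
    measurableSet_lt measurable_const ((measurable_excursionMax z).comp measurable_partialSums)
  refine measure_le_tsum_of_ae_mem_iUnion_inter
    (G := fun j : ℕ => firstPassageEvent (fun n ω => ∑ i ∈ range n, X i ω) (-(j * z)))
    (C := fun j n => (fun ω i => X (n + i) ω) ⁻¹'
      {u | x + j * z < excursionMax z fun m => ∑ i ∈ range m, u i})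
    (fun j n => measurableSet_firstPassageEvent fun k _ =>
      Finset.measurable_sum _ fun i _ => hmeas i)
    (fun j => pairwise_disjoint_firstPassageEvent _ _)
    (fun j n => hindep.measure_inter_shift_preimage hmeas hident
      (measurableSet_firstPassageEvent fun k hk => measurable_sum_range_past hk) (hA j)) ?_
  filter_upwards [hdown] with ω hω hM
  obtain ⟨k, hk⟩ := exists_lt_of_lt_ciSup hM
  obtain ⟨j, hj⟩ := exists_lt_excursionMax_of_lt hx.le hz hω hk
  exact ⟨j, _, mem_firstPassageEvent_hitTime (exists_sum_range_le_neg_mul hω j), hj⟩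

/-- Decomposition at the stopping time `τ_z`: for a random walk with i.i.d. increments of
mean `-a < 0`, `P(M > x) ≤ Σ_{j=0}^∞ P(M_{τ_z} > x + jz)` for all `x, z > 0`, where
`M = sup_{k≥0} S_k`, `τ_z = min{k ≥ 0 : S_k ≤ -z}` and `M_{τ_z} = max_{1 ≤ k ≤ τ_z} S_k`. -/
theorem stmt_0 {Ω : Type*} [MeasureSpace Ω] [IsProbabilityMeasure (ℙ : Measure Ω)]
    (X : ℕ → Ω → ℝ) (hmeas : ∀ i, Measurable (X i))
    (hindep : iIndepFun X ℙ)
    (hident : ∀ i, IdentDistrib (X i) (X 0) ℙ ℙ)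
    (hint : Integrable (X 0) ℙ)
    (a : ℝ) (ha : 0 < a) (hmean : ∫ ω, X 0 ω ∂ℙ = -a)
    (S : ℕ → Ω → ℝ) (hS : ∀ n ω, S n ω = ∑ i ∈ Finset.range n, X i ω)
    (z x : ℝ) (hz : 0 < z) (hx : 0 < x)
    (τ : Ω → ℕ) (hτ : ∀ ω, τ ω = sInf {k | S k ω ≤ -z})
    (hτfin : ∀ᵐ ω ∂ℙ, ∃ k, S k ω ≤ -z) :
    ℙ {ω | x < ⨆ k, S k ω} ≤
      ∑' j : ℕ, ℙ {ω | x + (j : ℕ) * z < ⨆ k ∈ Finset.Icc 1 (τ ω), S k ω} :=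
  stmt_0_general X hmeas hindep hident S hS z x hz hx τ hτ hτfin
end

section
/- Let X be a random variable with E[|X|^t] = A_t < ∞ for some t ∈ (1, 2]. Then for all h > 0 and y > 0: E[e^{hX} 1_{X ≤ y}] ≤ 1 + h E[X 1_{|X| ≤ y}] + A_t (e^{hy} - 1 - hy)/y^t. -/
/-!
With `φ u = exp u - 1 - u`, the ratio `φ u / u²` is nondecreasing on `ℝ`. Hence for `|x| ≤ y`
and `t ≤ 2`, `φ (h x) ≤ φ (h y) (x / y)² ≤ φ (h y) |x|^t / y^t`, while for `x < -y` simply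
`exp (h x) ≤ 1`. This gives, for every real `x`,
`1_{x ≤ y} exp (h x) ≤ 1 + h x 1_{|x| ≤ y} + φ (h y) |x|^t / y^t`,
and integrating against the law of `X` gives the bound.
-/

open MeasureTheory ProbabilityTheory Real Set

lemma exp_le_one_add_add_sq_div_two {x : ℝ} (hx : x ≤ 0) : exp x ≤ 1 + x + x ^ 2 / 2 := by
  have hneg : 1 + -x + (-x) ^ 2 / 2 ≤ exp (-x) := quadratic_le_exp_of_nonneg (by linarith)
  have hprod : exp x * exp (-x) = 1 := by rw [← exp_add, add_neg_cancel, exp_zero]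
  -- `(1 + x + x²/2)(1 - x + x²/2) = 1 + x⁴/4`
  nlinarith [exp_pos x, sq_nonneg (x ^ 2), sq_nonneg (x + 1)]

lemma exp_mul_sub_two_add_add_two_nonneg {x : ℝ} (hx : 0 ≤ x) :
    0 ≤ exp x * (x - 2) + x + 2 := by
  have hderiv (z : ℝ) :
      HasDerivAt (fun x ↦ exp x * (x - 2) + x + 2) (exp z * (z - 1) + 1) z :=
    ((((Real.hasDerivAt_exp z).mul ((hasDerivAt_id' z).sub_const 2)).add
      (hasDerivAt_id' z)).add_const 2).congr_deriv (by ring)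
  have hmono : Monotone fun x ↦ exp x * (x - 2) + x + 2 :=
    monotone_of_hasDerivAt_nonneg hderiv fun z ↦ by
      show 0 ≤ exp z * (z - 1) + 1
      have hprod : exp z * exp (-z) = 1 := by rw [← exp_add, add_neg_cancel, exp_zero]
      nlinarith [add_one_le_exp (-z), exp_pos z]
  simpa using hmono hx

lemma monotoneOn_exp_sub_one_sub_div_sq :
    MonotoneOn (fun x ↦ (exp x - 1 - x) / x ^ 2) (Ioi 0) := by
  refine monotoneOn_of_hasDerivWithinAt_nonneg (convex_Ioi 0)
    (f' := fun z ↦ ((exp z - 1) * z ^ 2 - (exp z - 1 - z) * (2 * z)) / (z ^ 2) ^ 2) ?_ ?_ ?_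
  · exact ContinuousOn.div (by fun_prop) (by fun_prop) fun z hz ↦ pow_ne_zero 2 (ne_of_gt hz)
  · intro z hz
    rw [interior_Ioi] at hz
    refine HasDerivAt.hasDerivWithinAt ?_
    exact (((Real.hasDerivAt_exp z).sub_const 1).sub (hasDerivAt_id z)).div
      (by simpa using hasDerivAt_pow 2 z) (pow_ne_zero 2 (ne_of_gt hz))
  · intro z hz
    rw [interior_Ioi] at hz
    have hz : 0 < z := hz
    -- the numerator is `z * (exp z * (z - 2) + z + 2)`
    refine div_nonneg ?_ (by positivity)
    nlinarith [mul_nonneg (exp_mul_sub_two_add_add_two_nonneg hz.le) hz.le]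

lemma exp_sub_one_sub_le_mul_div_sq {u v : ℝ} (huv : u ≤ v) (hv : 0 < v) :
    exp u - 1 - u ≤ (exp v - 1 - v) * (u / v) ^ 2 := by
  rcases lt_trichotomy u 0 with hu | rfl | hu
  · have hu' : exp u - 1 - u ≤ u ^ 2 / 2 := by linarith [exp_le_one_add_add_sq_div_two hu.le]
    have hv' : v ^ 2 / 2 ≤ exp v - 1 - v := by linarith [quadratic_le_exp_of_nonneg hv.le]
    calc exp u - 1 - u ≤ v ^ 2 / 2 * (u / v) ^ 2 := by
          have hsq : v ^ 2 / 2 * (u / v) ^ 2 = u ^ 2 / 2 := by field_simp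
          rwa [hsq]
      _ ≤ (exp v - 1 - v) * (u / v) ^ 2 := by gcongr
  · simp
  · have := monotoneOn_exp_sub_one_sub_div_sq hu (mem_Ioi.2 hv) huv
    simp only at this
    rw [div_pow, ← mul_div_assoc, le_div_iff₀ (by positivity)]
    rwa [le_div_iff₀ (by positivity), div_mul_eq_mul_div, div_le_iff₀ (by positivity)] at this

lemma exp_mul_le_of_abs_le {t h y x : ℝ} (ht : t ≤ 2) (hh : 0 < h) (hy : 0 < y)
    (hx : |x| ≤ y) :
    exp (h * x) ≤ 1 + h * x + (exp (h * y) - 1 - h * y) / y ^ t * |x| ^ t := by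
  have hφ : 0 ≤ exp (h * y) - 1 - h * y := by linarith [add_one_le_exp (h * y)]
  have hratio : (x / y) ^ 2 ≤ |x| ^ t / y ^ t := by
    rw [← div_rpow (abs_nonneg x) hy.le, ← sq_abs, abs_div, abs_of_pos hy, ← rpow_two]
    exact rpow_le_rpow_of_exponent_ge_of_imp (by positivity) ((div_le_one hy).2 hx) ht
      (fun _ h2 ↦ absurd h2 two_ne_zero)
  have hkey := exp_sub_one_sub_le_mul_div_sq
    (mul_le_mul_of_nonneg_left ((le_abs_self x).trans hx) hh.le) (mul_pos hh hy)
  rw [mul_div_mul_left _ _ hh.ne'] at hkey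
  calc exp (h * x) ≤ 1 + h * x + (exp (h * y) - 1 - h * y) * (x / y) ^ 2 := by linarith
    _ ≤ 1 + h * x + (exp (h * y) - 1 - h * y) * (|x| ^ t / y ^ t) := by gcongr
    _ = 1 + h * x + (exp (h * y) - 1 - h * y) / y ^ t * |x| ^ t := by ring

lemma ite_exp_mul_le {t h y : ℝ} (ht : t ≤ 2) (hh : 0 < h) (hy : 0 < y) (x : ℝ) :
    (if x ≤ y then exp (h * x) else 0) ≤
      1 + h * (if |x| ≤ y then x else 0) + (exp (h * y) - 1 - h * y) / y ^ t * |x| ^ t := by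
  have hrem : 0 ≤ (exp (h * y) - 1 - h * y) / y ^ t * |x| ^ t :=
    mul_nonneg (div_nonneg (by linarith [add_one_le_exp (h * y)]) (rpow_nonneg hy.le t))
      (rpow_nonneg (abs_nonneg x) t)
  split_ifs with hxy hax hax
  · exact exp_mul_le_of_abs_le ht hh hy hax
  · have hx : x ≤ 0 := by rcases lt_abs.1 (not_le.1 hax) with hlt | hlt <;> linarith
    have : exp (h * x) ≤ 1 := exp_le_one_iff.2 (mul_nonpos_of_nonneg_of_nonpos hh.le hx)
    linarith
  · linarith [le_abs_self x]
  · linarith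

theorem stmt_3_general {Ω : Type*} [MeasureSpace Ω] [IsProbabilityMeasure (ℙ : Measure Ω)]
    (X : Ω → ℝ) (hX : Measurable X) (hint : Integrable X ℙ)
    (t : ℝ) (ht2 : t ≤ 2)
    (At : ℝ) (hAt : ∫ ω, |X ω| ^ t ∂ℙ = At)
    (hintt : Integrable (fun ω => |X ω| ^ t) ℙ)
    (h y : ℝ) (hh : 0 < h) (hy : 0 < y) :
    (∫ ω in {ω | X ω ≤ y}, Real.exp (h * X ω) ∂ℙ) ≤
      1 + h * (∫ ω in {ω | |X ω| ≤ y}, X ω ∂ℙ) +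
        At * (Real.exp (h * y) - 1 - h * y) / y ^ t := by
  set C := (exp (h * y) - 1 - h * y) / y ^ t
  have hS : MeasurableSet {ω | X ω ≤ y} := measurableSet_le hX measurable_const
  have hT : MeasurableSet {ω | |X ω| ≤ y} := measurableSet_le hX.abs measurable_const
  have hbound (ω : Ω) : {ω | X ω ≤ y}.indicator (fun ω ↦ exp (h * X ω)) ω ≤
      1 + h * {ω | |X ω| ≤ y}.indicator X ω + C * |X ω| ^ t := by
    simpa only [indicator_apply, mem_ofPred_eq] using ite_exp_mul_le ht2 hh hy (X ω)
  have hind : Integrable (fun ω ↦ h * {ω | |X ω| ≤ y}.indicator X ω) :=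
    (hint.indicator hT).const_mul h
  calc ∫ ω in {ω | X ω ≤ y}, exp (h * X ω)
      = ∫ ω, {ω | X ω ≤ y}.indicator (fun ω ↦ exp (h * X ω)) ω := (integral_indicator hS).symm
    _ ≤ ∫ ω, (1 + h * {ω | |X ω| ≤ y}.indicator X ω + C * |X ω| ^ t) :=
      integral_mono_of_nonneg (ae_of_all _ fun ω ↦ indicator_nonneg (fun ω _ ↦ (exp_pos _).le) ω)
        (((integrable_const 1).add hind).add (hintt.const_mul C)) (ae_of_all _ hbound)
    _ = 1 + h * (∫ ω in {ω | |X ω| ≤ y}, X ω) + C * At := by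
      rw [integral_add, integral_add, integral_const_mul, integral_const_mul,
        integral_indicator hT, hAt]
      · simp
      exacts [integrable_const 1, hind, (integrable_const 1).add hind, hintt.const_mul C]
    _ = _ := by simp only [C]; ring

/-- Fuk–Nagaev truncated exponential moment bound: if `E[|X|^t] = A_t < ∞` for
`t ∈ (1,2]`, then for all `h > 0`, `y > 0`:
`E[e^{hX} 1_{X ≤ y}] ≤ 1 + h E[X 1_{|X| ≤ y}] + A_t (e^{hy} - 1 - hy)/y^t`. -/
theorem stmt_3 {Ω : Type*} [MeasureSpace Ω] [IsProbabilityMeasure (ℙ : Measure Ω)]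
    (X : Ω → ℝ) (hX : Measurable X) (hint : Integrable X ℙ)
    (t : ℝ) (ht1 : 1 < t) (ht2 : t ≤ 2)
    (At : ℝ) (hAt : ∫ ω, |X ω| ^ t ∂ℙ = At)
    (hintt : Integrable (fun ω => |X ω| ^ t) ℙ)
    (h y : ℝ) (hh : 0 < h) (hy : 0 < y) :
    (∫ ω in {ω | X ω ≤ y}, Real.exp (h * X ω) ∂ℙ) ≤
      1 + h * (∫ ω in {ω | |X ω| ≤ y}, X ω ∂ℙ) +
        At * (Real.exp (h * y) - 1 - h * y) / y ^ t :=
  stmt_3_general X hX hint t ht2 At hAt hintt h y hh hy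
end

section
/- Let V be a nonnegative random variable with E[V^t] < ∞ for some t ∈ (1, 2]. Then for every z > 0: ∫_0^∞ ∫_u^{u+z} P(V > v) dv du ≤ z^{2-t} E[V^t] / t. -/
/-!
By Tonelli, `∫_0^∞ ∫_u^{u+z} f(v) dv du = ∫_0^∞ f(v) min(v, z) dv` for any nonnegative `f`.
Since `min(v, z) ≤ z^{2-t} v^{t-1}` for `t ∈ [1, 2]`, taking `f(v) = P(V > v)` and applying the
layer-cake formula `E[V^t] = t ∫_0^∞ v^{t-1} P(V > v) dv` gives the bound.
-/

open MeasureTheory ProbabilityTheory Set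
open scoped ENNReal

theorem integral_integral_toReal_le_toReal_lintegral {α β : Type*} [MeasurableSpace α]
    [MeasurableSpace β] {μ : Measure α} {ν : α → Measure β} {f : α → β → ℝ≥0∞}
    (hf : ∫⁻ x, ∫⁻ y, f x y ∂ν x ∂μ ≠ ∞) :
    ∫ x, ∫ y, (f x y).toReal ∂ν x ∂μ ≤ (∫⁻ x, ∫⁻ y, f x y ∂ν x ∂μ).toReal := by
  refine (Real.le_norm_self _).trans <| (norm_integral_le_lintegral_norm _).trans <|
    ENNReal.toReal_mono hf <| lintegral_mono fun x => ?_
  rw [ofReal_norm]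
  refine (enorm_integral_le_lintegral_enorm _).trans <| lintegral_mono fun y => ?_
  rw [Real.enorm_eq_ofReal_abs, abs_of_nonneg ENNReal.toReal_nonneg]
  exact ENNReal.ofReal_toReal_le

theorem volume_Ico_sub_inter_Ioi_zero (v z : ℝ) :
    volume (Ico (v - z) v ∩ Ioi 0) = ENNReal.ofReal (min v z) := by
  rcases le_or_gt (v - z) 0 with hvz | hvz
  · have : Ico (v - z) v ∩ Ioi 0 = Ioo 0 v := by
      ext u
      simp only [mem_inter_iff, mem_Ico, mem_Ioi, mem_Ioo]
      exact ⟨fun ⟨⟨_, huv⟩, hu⟩ => ⟨hu, huv⟩, fun ⟨hu, huv⟩ => ⟨⟨by linarith, huv⟩, hu⟩⟩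
    rw [this, Real.volume_Ioo, sub_zero, min_eq_left (by linarith)]
  · rw [(inter_eq_left (s := Ico (v - z) v) (t := Ioi 0)).2 fun u hu => hvz.trans_le hu.1,
      Real.volume_Ico, sub_sub_cancel, min_eq_right (by linarith)]

theorem lintegral_Ioi_lintegral_Ioc_add {f : ℝ → ℝ≥0∞} (hf : Measurable f) (z : ℝ) :
    ∫⁻ u in Ioi 0, ∫⁻ v in Ioc u (u + z), f v = ∫⁻ v, f v * ENNReal.ofReal (min v z) := by
  have hswap : ∀ u v,
      (Ioc u (u + z)).indicator f v = (Ico (v - z) v).indicator (fun _ => f v) u := by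
    intro u v
    simp only [indicator_apply, mem_Ioc, mem_Ico]
    congr 1
    exact propext ⟨fun h => ⟨by linarith [h.2], h.1⟩, fun h => ⟨h.2, by linarith [h.1]⟩⟩
  have hmeas : Measurable (Function.uncurry fun u v => (Ioc u (u + z)).indicator f v) := by
    have hS : MeasurableSet {p : ℝ × ℝ | p.1 < p.2 ∧ p.2 ≤ p.1 + z} :=
      (measurableSet_lt measurable_fst measurable_snd).inter
        (measurableSet_le measurable_snd (measurable_fst.add_const z))
    exact (hf.comp measurable_snd).indicator hS
  simp_rw [← lintegral_indicator measurableSet_Ioc]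
  rw [lintegral_lintegral_swap hmeas.aemeasurable]
  refine lintegral_congr fun v => ?_
  simp_rw [hswap, lintegral_indicator measurableSet_Ico, setLIntegral_const,
    Measure.restrict_apply measurableSet_Ico, volume_Ico_sub_inter_Ioi_zero]

theorem min_le_rpow_mul_rpow {v z a : ℝ} (hv : 0 ≤ v) (hz : 0 ≤ z) (ha0 : 0 ≤ a) (ha1 : a ≤ 1) :
    min v z ≤ v ^ a * z ^ (1 - a) := by
  have hm : 0 ≤ min v z := le_min hv hz
  calc min v z = min v z ^ a * min v z ^ (1 - a) := by
        rw [← Real.rpow_add' hm (by norm_num), add_sub_cancel, Real.rpow_one]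
    _ ≤ v ^ a * z ^ (1 - a) :=
        mul_le_mul (Real.rpow_le_rpow hm (min_le_left _ _) ha0)
          (Real.rpow_le_rpow hm (min_le_right _ _) (by linarith)) (by positivity) (by positivity)

theorem lintegral_Ioi_lintegral_Ioc_meas_lt_le {Ω : Type*} [MeasurableSpace Ω] (μ : Measure Ω)
    {V : Ω → ℝ} (hV : AEMeasurable V μ) (hV0 : 0 ≤ᵐ[μ] V) {t : ℝ} (ht1 : 1 ≤ t) (ht2 : t ≤ 2)
    {z : ℝ} (hz : 0 ≤ z) :
    ∫⁻ u in Ioi 0, ∫⁻ v in Ioc u (u + z), μ {ω | v < V ω} ≤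
      ENNReal.ofReal (z ^ (2 - t) / t) * ∫⁻ ω, ENNReal.ofReal (V ω ^ t) ∂μ := by
  have ht0 : 0 < t := by linarith
  have hanti : Antitone fun v => μ {ω | v < V ω} :=
    fun a b hab => measure_mono fun ω hb => hab.trans_lt hb
  rw [lintegral_Ioi_lintegral_Ioc_add hanti.measurable,
    lintegral_rpow_eq_lintegral_meas_lt_mul μ hV0 hV ht0, ← mul_assoc,
    ← ENNReal.ofReal_mul (by positivity), div_mul_cancel₀ _ ht0.ne',
    ← lintegral_const_mul' _ _ ENNReal.ofReal_ne_top, ← lintegral_indicator measurableSet_Ioi]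
  refine lintegral_mono fun v => ?_
  rcases le_or_gt v 0 with hv | hv
  · simp [min_eq_left (hv.trans hz), ENNReal.ofReal_of_nonpos hv]
  · rw [indicator_of_mem (mem_Ioi.2 hv), mul_left_comm, ← ENNReal.ofReal_mul (by positivity)]
    gcongr
    calc min v z ≤ v ^ (t - 1) * z ^ (1 - (t - 1)) :=
          min_le_rpow_mul_rpow hv.le hz (by linarith) (by linarith)
      _ = z ^ (2 - t) * v ^ (t - 1) := by ring_nf

theorem stmt_11_general {Ω : Type*} [MeasureSpace Ω]
    (V : Ω → ℝ) (hV : Measurable V) (hV0 : ∀ ω, 0 ≤ V ω)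
    (t : ℝ) (ht1 : 1 < t) (ht2 : t ≤ 2)
    (hint : Integrable (fun ω => V ω ^ t) ℙ)
    (z : ℝ) (hz : 0 < z) :
    (∫ u in Set.Ioi (0 : ℝ),
        ∫ v in Set.Ioc u (u + z), ((ℙ : Measure Ω) {ω | v < V ω}).toReal) ≤
      z ^ (2 - t) * (∫ ω, V ω ^ t ∂ℙ) / t := by
  have hbound := lintegral_Ioi_lintegral_Ioc_meas_lt_le ℙ hV.aemeasurable (ae_of_all _ hV0)
    ht1.le ht2 hz.le
  have hfin : ENNReal.ofReal (z ^ (2 - t) / t) * ∫⁻ ω, ENNReal.ofReal (V ω ^ t) ∂ℙ ≠ ∞ :=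
    ENNReal.mul_ne_top ENNReal.ofReal_ne_top hint.lintegral_lt_top.ne
  calc _ ≤ (∫⁻ u in Ioi 0, ∫⁻ v in Ioc u (u + z), (ℙ : Measure Ω) {ω | v < V ω}).toReal :=
        integral_integral_toReal_le_toReal_lintegral (hbound.trans_lt hfin.lt_top).ne
    _ ≤ (ENNReal.ofReal (z ^ (2 - t) / t) * ∫⁻ ω, ENNReal.ofReal (V ω ^ t) ∂ℙ).toReal :=
        ENNReal.toReal_mono hfin hbound
    _ = z ^ (2 - t) * (∫ ω, V ω ^ t ∂ℙ) / t := by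
        rw [ENNReal.toReal_mul, ENNReal.toReal_ofReal (by positivity),
          ← integral_eq_lintegral_of_nonneg_ae (ae_of_all _ fun ω => Real.rpow_nonneg (hV0 ω) t)
            hint.aestronglyMeasurable, mul_div_right_comm]

/-- For a nonnegative random variable `V` with `E[V^t] < ∞`, `t ∈ (1,2]`, and `z > 0`:
`∫_0^∞ ∫_u^{u+z} P(V > v) dv du ≤ z^{2-t} E[V^t] / t`. -/
theorem stmt_11 {Ω : Type*} [MeasureSpace Ω] [IsProbabilityMeasure (ℙ : Measure Ω)]
    (V : Ω → ℝ) (hV : Measurable V) (hV0 : ∀ ω, 0 ≤ V ω)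
    (t : ℝ) (ht1 : 1 < t) (ht2 : t ≤ 2)
    (hint : Integrable (fun ω => V ω ^ t) ℙ)
    (z : ℝ) (hz : 0 < z) :
    (∫ u in Set.Ioi (0 : ℝ),
        ∫ v in Set.Ioc u (u + z), ((ℙ : Measure Ω) {ω | v < V ω}).toReal) ≤
      z ^ (2 - t) * (∫ ω, V ω ^ t ∂ℙ) / t :=
  stmt_11_general V hV hV0 t ht1 ht2 hint z hz
end
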